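/- arXiv:2506.20054 — 3 statements merged into one kernel-verified Lean document; each statement's English description precedes it below -/
import Mathlib

section
/- Let $\lambda, L > 0$ with $4L \le \lambda \le 1$. Let $u, v$ be vectors in $\mathbb{R}^n$ with $\|u\|_2 \le 1$ and $\|v\|_2 \le 1$, and let $x \in \mathbb{R}^n$ satisfy $|\langle x, u\rangle| \le \lambda/2$ and $|\langle x, u - v\rangle| \ge L \|u - v\|_2$. Then $|\Phi_\lambda(\langle x,u\rangle) - \Phi_\lambda(\langle x,v\rangle)| \ge L \|u-v\|_2$. -/
/-!
Since `|⟨x, u⟩| ≤ λ/2`, clipping leaves `⟨x, u⟩` unchanged. If `⟨x, v⟩` is not clipped either,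
the difference is `⟨x, u - v⟩`; if it is clipped to `±λ`, the difference is at least `λ/2 ≥ 2L`,
which dominates `L ‖u - v‖` because `‖u - v‖ ≤ 2`.
-/

noncomputable def clip (lam x : ℝ) : ℝ := max (-lam) (min x lam)

theorem clip_of_abs_le {lam t : ℝ} (ht : |t| ≤ lam) : clip lam t = t := by
  obtain ⟨hlo, hhi⟩ := abs_le.mp ht
  rw [clip, min_eq_left hhi, max_eq_right hlo]

theorem min_abs_sub_le_abs_clip_sub_clip {lam a b : ℝ} (ha : |a| ≤ lam / 2) :
    min |a - b| (lam / 2) ≤ |clip lam a - clip lam b| := by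
  obtain ⟨hlo, hhi⟩ := abs_le.mp ha
  rw [clip_of_abs_le (by linarith [abs_nonneg a])]
  rcases le_or_gt b lam with hb_le | hb_gt
  · rcases le_or_gt (-lam) b with hb_ge | hb_lt
    · rw [clip_of_abs_le (abs_le.mpr ⟨hb_ge, hb_le⟩)]
      exact min_le_left _ _
    · rw [clip, min_eq_left hb_le, max_eq_left hb_lt.le,
        abs_of_nonneg (show 0 ≤ a - -lam by linarith)]
      exact (min_le_right _ _).trans (by linarith)
  · rw [clip, min_eq_right hb_gt.le, max_eq_right (by linarith),
      abs_of_nonpos (show a - lam ≤ 0 by linarith)]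
    exact (min_le_right _ _).trans (by linarith)

theorem clip_lemma_general (n : ℕ) (lam L : ℝ) (hL : 0 < L) (h4L : 4 * L ≤ lam)
    (u v x : EuclideanSpace ℝ (Fin n)) (hu : ‖u‖ ≤ 1) (hv : ‖v‖ ≤ 1)
    (hxu : |(inner ℝ x u : ℝ)| ≤ lam / 2)
    (hxuv : |(inner ℝ x (u - v) : ℝ)| ≥ L * ‖u - v‖) :
    |clip lam (inner ℝ x u : ℝ) - clip lam (inner ℝ x v : ℝ)| ≥ L * ‖u - v‖ := by
  have hnorm : ‖u - v‖ ≤ 2 := (norm_sub_le u v).trans (by linarith)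
  have hsmall : L * ‖u - v‖ ≤ lam / 2 :=
    calc L * ‖u - v‖ ≤ L * 2 := mul_le_mul_of_nonneg_left hnorm hL.le
      _ ≤ lam / 2 := by linarith
  rw [inner_sub_right] at hxuv
  exact (le_min hxuv hsmall).trans (min_abs_sub_le_abs_clip_sub_clip hxu)

theorem clip_lemma (n : ℕ) (lam L : ℝ) (hL : 0 < L) (h4L : 4 * L ≤ lam) (hlam : lam ≤ 1)
    (u v x : EuclideanSpace ℝ (Fin n)) (hu : ‖u‖ ≤ 1) (hv : ‖v‖ ≤ 1)
    (hxu : |(inner ℝ x u : ℝ)| ≤ lam / 2)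
    (hxuv : |(inner ℝ x (u - v) : ℝ)| ≥ L * ‖u - v‖) :
    |clip lam (inner ℝ x u : ℝ) - clip lam (inner ℝ x v : ℝ)| ≥ L * ‖u - v‖ :=
  clip_lemma_general n lam L hL h4L u v x hu hv hxu hxuv
end

section
/- Let $\lambda > 0$, $0 < a < 1/4$, and define $\Omega_a = \bigcup_{m \in \mathbb{Z}} [(a + 2m)\lambda, (1 - a + 2m)\lambda]$. If $s, t$ are real numbers with $s - t \in \Omega_a$, then $|\mathcal{M}_\lambda(s) - \mathcal{M}_\lambda(t)| \ge a\lambda$. -/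
/-! The fold of `s` is `s` minus an integer multiple of `2λ`, so `M_λ(s) - M_λ(t)` differs from
`s - t` by a multiple of `2λ`. The set `Ω_a` is invariant under such shifts, and each of its
intervals lies either in `[aλ, ∞)` or in `(-∞, -(1 + a)λ]`. -/

noncomputable def fold (lam s : ℝ) : ℝ :=
  2 * lam * (s / (2 * lam) + 1 / 2 - ⌊s / (2 * lam) + 1 / 2⌋ - 1 / 2)

def Omega (a lam : ℝ) : Set ℝ :=
  ⋃ m : ℤ, Set.Icc ((a + 2 * m) * lam) ((1 - a + 2 * m) * lam)

theorem fold_eq_sub_two_mul_floor {lam : ℝ} (hlam : lam ≠ 0) (s : ℝ) :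
    fold lam s = s - 2 * lam * ⌊s / (2 * lam) + 1 / 2⌋ := by
  unfold fold
  field_simp
  ring

theorem exists_fold_sub_fold_eq {lam : ℝ} (hlam : lam ≠ 0) (s t : ℝ) :
    ∃ j : ℤ, fold lam s - fold lam t = s - t + 2 * lam * j :=
  ⟨⌊t / (2 * lam) + 1 / 2⌋ - ⌊s / (2 * lam) + 1 / 2⌋, by
    rw [fold_eq_sub_two_mul_floor hlam, fold_eq_sub_two_mul_floor hlam]
    push_cast
    ring⟩

theorem add_two_mul_int_mem_Omega {a lam x : ℝ} (hx : x ∈ Omega a lam) (j : ℤ) :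
    x + 2 * lam * j ∈ Omega a lam := by
  obtain ⟨m, hm⟩ := Set.mem_iUnion.mp hx
  refine Set.mem_iUnion.mpr ⟨m + j, ?_⟩
  push_cast
  constructor <;> linarith [hm.1, hm.2]

theorem le_abs_of_mem_Omega {a lam x : ℝ} (hlam : 0 ≤ lam) (hx : x ∈ Omega a lam) :
    a * lam ≤ |x| := by
  obtain ⟨m, hlo, hhi⟩ := Set.mem_iUnion.mp hx
  rcases le_or_gt 0 m with hm | hm
  · have hm' : (0 : ℝ) ≤ m := by exact_mod_cast hm
    exact (by nlinarith : a * lam ≤ x).trans (le_abs_self x)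
  · have hm' : (m : ℝ) ≤ -1 := by exact_mod_cast Int.le_sub_one_of_lt hm
    exact (by nlinarith : a * lam ≤ -x).trans (neg_le_abs x)

theorem fold_omega_lower_general (lam a : ℝ) (hlam : 0 < lam)
    (s t : ℝ)
    (hst : s - t ∈ ⋃ m : ℤ, Set.Icc ((a + 2 * m) * lam) ((1 - a + 2 * m) * lam)) :
    |fold lam s - fold lam t| ≥ a * lam := by
  obtain ⟨j, hj⟩ := exists_fold_sub_fold_eq hlam.ne' s t
  rw [hj]
  exact le_abs_of_mem_Omega hlam.le (add_two_mul_int_mem_Omega hst j)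

theorem fold_omega_lower (lam a : ℝ) (hlam : 0 < lam) (ha : 0 < a) (ha' : a < 1 / 4)
    (s t : ℝ)
    (hst : s - t ∈ ⋃ m : ℤ, Set.Icc ((a + 2 * m) * lam) ((1 - a + 2 * m) * lam)) :
    |fold lam s - fold lam t| ≥ a * lam :=
  fold_omega_lower_general lam a hlam s t hst
end

section
/- Let $\lambda > 0$, $m, n \ge 1$, let $x_1, \dots, x_m \in \mathbb{R}^n$, and let $u \in \mathbb{R}^n$ be a unit vector. Then $\lim_{\varepsilon \to 0^+} \frac{1}{m} \sum_{j=1}^m \frac{|\Phi_\lambda(\langle u, x_j\rangle) - \Phi_\lambda(\langle (1-\varepsilon)u, x_j\rangle)|^2}{\|u - (1-\varepsilon)u\|_2^2} = \frac{1}{m} \sum_{j : |\langle u, x_j\rangle| \le \lambda} |\langle u, x_j\rangle|^2$. -/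
open Filter

open Topology

lemma clip_of_abs_le_s14 {lam x : ℝ} (h : |x| ≤ lam) : clip lam x = x := by
  rw [abs_le] at h
  rw [clip, min_eq_left h.2, max_eq_right h.1]

lemma clip_eventuallyEq_of_lt_abs {lam a : ℝ} (h : lam < |a|) :
    ∀ᶠ x in 𝓝 a, clip lam x = clip lam a := by
  rcases lt_abs.mp h with hpos | hneg
  · filter_upwards [lt_mem_nhds hpos] with x hx
    rw [clip, clip, min_eq_right hx.le, min_eq_right hpos.le]
  · have hlt : a < -lam := by linarith
    have hclip : ∀ y < -lam, clip lam y = -lam := fun y hy =>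
      max_eq_left ((min_le_left y lam).trans hy.le)
    filter_upwards [gt_mem_nhds hlt] with x hx
    rw [hclip x hx, hclip a hlt]

/-- Inside the clipping window the quotient is identically `a ^ 2`; outside it, `clip` is locally
constant at `a`, so the quotient vanishes for small `ε`. -/
lemma tendsto_clip_sub_clip_one_sub_mul_sq_div (lam a : ℝ) :
    Tendsto (fun ε : ℝ => (clip lam a - clip lam ((1 - ε) * a)) ^ 2 / ε ^ 2)
      (𝓝[>] 0) (𝓝 (if |a| ≤ lam then a ^ 2 else 0)) := by
  refine tendsto_const_nhds.congr' ?_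
  by_cases ha : |a| ≤ lam
  · filter_upwards [self_mem_nhdsWithin, nhdsWithin_le_nhds (gt_mem_nhds one_pos)]
      with ε (hε0 : 0 < ε) hε1
    have hscaled : |(1 - ε) * a| ≤ lam := by
      rw [abs_mul, abs_of_pos (sub_pos.mpr hε1)]
      nlinarith [abs_nonneg a]
    rw [if_pos ha, clip_of_abs_le_s14 ha, clip_of_abs_le_s14 hscaled]
    field_simp
    ring
  · have hscaled : Tendsto (fun ε : ℝ => (1 - ε) * a) (𝓝[>] 0) (𝓝 a) := by
      have : Tendsto (fun ε : ℝ => (1 - ε) * a) (𝓝 0) (𝓝 ((1 - 0) * a)) :=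
        ((continuous_const.sub continuous_id).mul continuous_const).tendsto 0
      rw [sub_zero, one_mul] at this
      exact this.mono_left nhdsWithin_le_nhds
    filter_upwards [hscaled.eventually (clip_eventuallyEq_of_lt_abs (not_le.mp ha))] with ε hε
    rw [if_neg ha, hε, sub_self, zero_pow two_ne_zero, zero_div]

lemma norm_sub_one_sub_smul_self {E : Type*} [SeminormedAddCommGroup E] [NormedSpace ℝ E]
    (u : E) (ε : ℝ) : ‖u - (1 - ε) • u‖ = |ε| * ‖u‖ := by
  rw [sub_smul, one_smul, sub_sub_cancel, norm_smul, Real.norm_eq_abs]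

theorem clip_ray_limit_general (lam : ℝ) (m n : ℕ)
    (x : Fin m → EuclideanSpace ℝ (Fin n)) (u : EuclideanSpace ℝ (Fin n)) (hu : ‖u‖ = 1) :
    Tendsto (fun ε : ℝ =>
        (1 / m : ℝ) * ∑ j, |clip lam (inner ℝ u (x j) : ℝ) -
          clip lam (inner ℝ ((1 - ε) • u) (x j) : ℝ)| ^ 2 / ‖u - (1 - ε) • u‖ ^ 2)
      (nhdsWithin 0 (Set.Ioi 0))
      (nhds ((1 / m : ℝ) * ∑ j,
        if |(inner ℝ u (x j) : ℝ)| ≤ lam then (inner ℝ u (x j) : ℝ) ^ 2 else 0)) := by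
  simp only [real_inner_smul_left, norm_sub_one_sub_smul_self, hu, mul_one, sq_abs]
  exact (tendsto_finsetSum _ fun j _ => tendsto_clip_sub_clip_one_sub_mul_sq_div lam _).const_mul _

theorem clip_ray_limit (lam : ℝ) (hlam : 0 < lam) (m n : ℕ) (hm : 1 ≤ m) (hn : 1 ≤ n)
    (x : Fin m → EuclideanSpace ℝ (Fin n)) (u : EuclideanSpace ℝ (Fin n)) (hu : ‖u‖ = 1) :
    Tendsto (fun ε : ℝ =>
        (1 / m : ℝ) * ∑ j, |clip lam (inner ℝ u (x j) : ℝ) -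
          clip lam (inner ℝ ((1 - ε) • u) (x j) : ℝ)| ^ 2 / ‖u - (1 - ε) • u‖ ^ 2)
      (nhdsWithin 0 (Set.Ioi 0))
      (nhds ((1 / m : ℝ) * ∑ j,
        if |(inner ℝ u (x j) : ℝ)| ≤ lam then (inner ℝ u (x j) : ℝ) ^ 2 else 0)) :=
  clip_ray_limit_general lam m n x u hu
end
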